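/- Let Ω ⊆ ℝᵈ be open and V : Ω → [-∞, ∞) measurable and locally bounded above with weakly upper semi-continuous regularization V⋆. If u : Ω → [-∞, ∞) is subharmonic (or more generally upper semi-continuous and satisfying the sub-mean value property) with u ≤ V almost everywhere, and V is weakly upper semi-continuous (V⋆ = V), then u ≤ V everywhere on Ω. -/

import Mathlib

open MeasureTheory Metric Filter
open scoped ENNReal NNReal

noncomputable instance {n : ℕ} : MeasureSpace (EuclideanSpace ℂ (Fin n)) :=
  { volume := Measure.map (MeasurableEquiv.toLp 2 (Fin n → ℂ)) volume }

/-- `EReal → ℝ≥0∞`, clipping negative values to `0`. -/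
noncomputable def erealToENNReal (x : EReal) : ℝ≥0∞ :=
  if x = ⊤ then ⊤ else ENNReal.ofReal x.toReal

/-- The truncated ball mean `(⨍_{B(a,r)} max (u x) (-n) dμ)` of an `EReal`-valued function,
encoded via `lintegral` of the nonnegative shift `max u (-n) + n`, then shifted back by `-n`. -/
noncomputable def truncMean {E : Type*} [MeasurableSpace E] [PseudoMetricSpace E]
    (μ : Measure E) (u : E → EReal) (a : E) (r : ℝ) (k : ℕ) : EReal :=
  (((∫⁻ x in ball a r, erealToENNReal ((u x ⊔ ((-(k : ℝ) : ℝ) : EReal)) + ((k : ℝ) : EReal)) ∂μ)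
      / μ (ball a r) : ℝ≥0∞) : EReal) + ((-(k : ℝ) : ℝ) : EReal)

/-- Sub-mean value property on `Ω`: on every closed ball contained in `Ω`, `u` is dominated
by its ball means (expressed through decreasing truncated means). -/
def SubMeanOn {E : Type*} [MeasurableSpace E] [PseudoMetricSpace E]
    (μ : Measure E) (u : E → EReal) (Ω : Set E) : Prop :=
  ∀ a ∈ Ω, ∀ r : ℝ, 0 < r → closedBall a r ⊆ Ω → u a ≤ ⨅ k : ℕ, truncMean μ u a r k

/-- Subharmonicity: upper semicontinuity plus the sub-mean value property. -/
def SubharmonicOn {E : Type*} [MeasurableSpace E] [PseudoMetricSpace E]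
    (μ : Measure E) (u : E → EReal) (Ω : Set E) : Prop :=
  UpperSemicontinuousOn u Ω ∧ SubMeanOn μ u Ω

/-- Plurisubharmonicity on `Ω ⊆ ℂⁿ`: upper semicontinuity plus subharmonicity along every
complex line. -/
def PlurisubharmonicOn {n : ℕ} (u : EuclideanSpace ℂ (Fin n) → EReal)
    (Ω : Set (EuclideanSpace ℂ (Fin n))) : Prop :=
  UpperSemicontinuousOn u Ω ∧
    ∀ a b : EuclideanSpace ℂ (Fin n),
      SubMeanOn volume (fun z : ℂ => u (a + z • b)) {z : ℂ | a + z • b ∈ Ω}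

/-- `exp : EReal → ℝ≥0∞` (this is `EReal.exp`). -/
noncomputable def expE (x : EReal) : ℝ≥0∞ := x.exp

/-- The weight `e^{-2mV}` as an `ℝ≥0∞`-valued function. -/
noncomputable def weight {n : ℕ} (m : ℝ) (V : EuclideanSpace ℂ (Fin n) → EReal)
    (z : EuclideanSpace ℂ (Fin n)) : ℝ≥0∞ :=
  expE (-(((2 * m : ℝ) : EReal) * V z))

/-- The weighted Bergman kernel on the diagonal for the weight `e^{-2mV}` on `Ω`. -/
noncomputable def bergmanK {n : ℕ} (Ω : Set (EuclideanSpace ℂ (Fin n))) (m : ℝ)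
    (V : EuclideanSpace ℂ (Fin n) → EReal) (z : EuclideanSpace ℂ (Fin n)) : ℝ≥0∞ :=
  ⨆ (f : EuclideanSpace ℂ (Fin n) → ℂ) (_ : DifferentiableOn ℂ f Ω)
    (_ : ∫⁻ w in Ω, (‖f w‖₊ : ℝ≥0∞) ^ 2 * weight m V w ≤ 1), (‖f z‖₊ : ℝ≥0∞) ^ 2

/-- Demailly's approximation `V_m = (1/(2m)) log K_{mV}`. -/
noncomputable def demailly {n : ℕ} (Ω : Set (EuclideanSpace ℂ (Fin n)))
    (V : EuclideanSpace ℂ (Fin n) → EReal) (m : ℝ) (z : EuclideanSpace ℂ (Fin n)) : EReal :=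
  (((1 / (2 * m) : ℝ)) : EReal) * ENNReal.log (bergmanK Ω m V z)

/-- Local boundedness from above on `Ω`. -/
def LocBddAbove {E : Type*} [PseudoMetricSpace E] (V : E → EReal) (Ω : Set E) : Prop :=
  ∀ a ∈ Ω, ∃ r > 0, ∃ M : ℝ, ∀ z ∈ ball a r ∩ Ω, V z ≤ (M : ℝ)

/-- The weakly upper semicontinuous regularization
`V⋆(a) = lim_{r→0⁺} esssup_{B(a,r)∩Ω} V = inf_{r>0} esssup_{B(a,r)∩Ω} V`. -/
noncomputable def wuscReg {E : Type*} [MeasurableSpace E] [PseudoMetricSpace E]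
    (μ : Measure E) (Ω : Set E) (V : E → EReal) (a : E) : EReal :=
  ⨅ (r : ℝ) (_ : 0 < r), essSup V (μ.restrict (ball a r ∩ Ω))

/-- `V` is weakly upper semicontinuous on `Ω` when `V⋆ = V` there. -/
def WeaklyUSCOn {E : Type*} [MeasurableSpace E] [PseudoMetricSpace E]
    (μ : Measure E) (Ω : Set E) (V : E → EReal) : Prop :=
  ∀ a ∈ Ω, wuscReg μ Ω V a = V a

/-- The plurisubharmonic envelope `Ṽ = sup {ψ psh on Ω : ψ ≤ V on Ω}`. -/
noncomputable def pshEnvelope {n : ℕ} (Ω : Set (EuclideanSpace ℂ (Fin n)))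
    (V : EuclideanSpace ℂ (Fin n) → EReal) (z : EuclideanSpace ℂ (Fin n)) : EReal :=
  ⨆ (ψ : EuclideanSpace ℂ (Fin n) → EReal) (_ : PlurisubharmonicOn ψ Ω)
    (_ : ∀ w ∈ Ω, ψ w ≤ V w), ψ z

/-- Pseudoconvexity: `-log dist(·, ∂Ω)` is plurisubharmonic on `Ω`. -/
def Pseudoconvex {n : ℕ} (Ω : Set (EuclideanSpace ℂ (Fin n))) : Prop :=
  IsOpen Ω ∧
    PlurisubharmonicOn (fun z => ((-Real.log (infDist z Ωᶜ) : ℝ) : EReal)) Ω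

lemma erealToENNReal_mono : Monotone erealToENNReal := by
  intro x y h
  unfold erealToENNReal
  by_cases hy : y = ⊤
  · simp [hy]
  · have hx : x ≠ ⊤ := fun hx => hy (top_le_iff.mp (hx ▸ h))
    rw [if_neg hx, if_neg hy]
    by_cases hxb : x = ⊥
    · simp [hxb]
    · exact ENNReal.ofReal_le_ofReal (EReal.toReal_le_toReal h hxb hy)

lemma erealToENNReal_coe (c : ℝ) : erealToENNReal (c : EReal) = ENNReal.ofReal c := by
  simp [erealToENNReal, EReal.coe_ne_top]

lemma truncMean_le {E : Type*} [MeasurableSpace E] [PseudoMetricSpace E]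
    (μ : Measure E) (u : E → EReal) (a : E) (r : ℝ) (M : ℝ)
    (hM : ∀ᵐ x ∂(μ.restrict (ball a r)), u x ≤ (M : EReal)) (k : ℕ) (hk : -(k : ℝ) ≤ M) :
    truncMean μ u a r k ≤ (M : EReal) := by
  have hint : (∫⁻ x in ball a r,
      erealToENNReal ((u x ⊔ ((-(k : ℝ) : ℝ) : EReal)) + ((k : ℝ) : EReal)) ∂μ)
      ≤ ENNReal.ofReal (M + k) * μ (ball a r) := by
    calc (∫⁻ x in ball a r,
        erealToENNReal ((u x ⊔ ((-(k : ℝ) : ℝ) : EReal)) + ((k : ℝ) : EReal)) ∂μ)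
        ≤ ∫⁻ _x in ball a r, ENNReal.ofReal (M + k) ∂μ := by
          refine lintegral_mono_ae (hM.mono fun x hx => ?_)
          have h1 : (u x ⊔ ((-(k : ℝ) : ℝ) : EReal)) ≤ (M : EReal) :=
            sup_le hx (by exact_mod_cast hk)
          have h2 : (u x ⊔ ((-(k : ℝ) : ℝ) : EReal)) + ((k : ℝ) : EReal)
              ≤ ((M + k : ℝ) : EReal) := by
            rw [EReal.coe_add]
            exact add_le_add_left h1 _
          calc erealToENNReal ((u x ⊔ ((-(k : ℝ) : ℝ) : EReal)) + ((k : ℝ) : EReal))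
              ≤ erealToENNReal ((M + k : ℝ) : EReal) := erealToENNReal_mono h2
            _ = ENNReal.ofReal (M + k) := erealToENNReal_coe _
      _ = ENNReal.ofReal (M + k) * μ (ball a r) := by
          rw [setLIntegral_const]
  have hdiv : (∫⁻ x in ball a r,
      erealToENNReal ((u x ⊔ ((-(k : ℝ) : ℝ) : EReal)) + ((k : ℝ) : EReal)) ∂μ)
      / μ (ball a r) ≤ ENNReal.ofReal (M + k) := ENNReal.div_le_of_le_mul hint
  have hcoe : (((∫⁻ x in ball a r,
      erealToENNReal ((u x ⊔ ((-(k : ℝ) : ℝ) : EReal)) + ((k : ℝ) : EReal)) ∂μ)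
      / μ (ball a r) : ℝ≥0∞) : EReal) ≤ ((M + k : ℝ) : EReal) := by
    calc (((∫⁻ x in ball a r,
        erealToENNReal ((u x ⊔ ((-(k : ℝ) : ℝ) : EReal)) + ((k : ℝ) : EReal)) ∂μ)
        / μ (ball a r) : ℝ≥0∞) : EReal)
        ≤ ((ENNReal.ofReal (M + k) : ℝ≥0∞) : EReal) := by
          exact_mod_cast hdiv
      _ = ((M + k : ℝ) : EReal) := by
          rw [EReal.coe_ennreal_ofReal, max_eq_left (by linarith)]
  unfold truncMean
  calc _ ≤ ((M + k : ℝ) : EReal) + ((-(k : ℝ) : ℝ) : EReal) := add_le_add_left hcoe _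
    _ = (M : EReal) := by
        rw [← EReal.coe_add]; norm_num

/-- subharmonic functions a.e. below a weakly usc weight are everywhere
below it. -/
theorem stmt_7 {d : ℕ} (Ω : Set (EuclideanSpace ℝ (Fin d))) (hΩo : IsOpen Ω)
    (V : EuclideanSpace ℝ (Fin d) → EReal) (hVm : Measurable V)
    (hVne : ∀ z ∈ Ω, V z ≠ ⊤) (hVb : LocBddAbove V Ω)
    (hVw : WeaklyUSCOn volume Ω V)
    (u : EuclideanSpace ℝ (Fin d) → EReal) (hu : SubharmonicOn volume u Ω)
    (huV : ∀ᵐ z ∂(volume.restrict Ω), u z ≤ V z) :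
    ∀ a ∈ Ω, u a ≤ V a := by
  intro a ha
  rw [← hVw a ha]
  unfold wuscReg
  refine le_iInf fun r => le_iInf fun hr => ?_
  -- choose a small radius r0 ≤ r with closedBall a r0 ⊆ Ω
  obtain ⟨ε, hε, hball⟩ := Metric.isOpen_iff.mp hΩo a ha
  set r0 : ℝ := min (ε / 2) r with hr0def
  have hr0 : 0 < r0 := lt_min (by linarith) hr
  have hr0r : r0 ≤ r := min_le_right _ _
  have hsub0 : ball a r0 ⊆ Ω := fun x hx => hball (lt_of_lt_of_le hx (by
    calc r0 ≤ ε / 2 := min_le_left _ _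
      _ ≤ ε := by linarith))
  have hcsub : closedBall a r0 ⊆ Ω := fun x hx =>
    hball (mem_ball.mpr (lt_of_le_of_lt (mem_closedBall.mp hx)
      (lt_of_le_of_lt (min_le_left _ _) (by linarith))))
  have hinter : ball a r0 ∩ Ω = ball a r0 := Set.inter_eq_left.mpr hsub0
  set S : EReal := essSup V (volume.restrict (ball a r0 ∩ Ω)) with hSdef
  -- u ≤ S a.e. on the small ball
  have hae : ∀ᵐ x ∂(volume.restrict (ball a r0)), u x ≤ S := by
    have h1 : ∀ᵐ x ∂(volume.restrict (ball a r0)), u x ≤ V x :=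
      huV.filter_mono (ae_mono (Measure.restrict_mono hsub0 le_rfl))
    have h2 : ∀ᵐ x ∂(volume.restrict (ball a r0)), V x ≤ S := by
      rw [hSdef, hinter]; exact ae_le_essSup
    filter_upwards [h1, h2] with x hx1 hx2 using hx1.trans hx2
  -- u a is below the truncated means
  have humean : u a ≤ ⨅ k : ℕ, truncMean volume u a r0 k := hu.2 a ha r0 hr0 hcsub
  -- the inf of truncated means is ≤ M for every real M ≥ S
  have hforall : ∀ M : ℝ, S ≤ (M : EReal) →
      (⨅ k : ℕ, truncMean volume u a r0 k) ≤ (M : EReal) := by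
    intro M hSM
    have hk : -((⌈-M⌉₊ : ℕ) : ℝ) ≤ M := by
      have := Nat.le_ceil (-M); linarith
    exact iInf_le_of_le ⌈-M⌉₊
      (truncMean_le volume u a r0 M (hae.mono fun x hx => hx.trans hSM) _ hk)
  have hmain : u a ≤ S := by
    by_cases htop : S = ⊤
    · rw [htop]; exact le_top
    by_cases hbot : S = ⊥
    · rw [hbot]
      have : (⨅ k : ℕ, truncMean volume u a r0 k) = ⊥ := by
        rw [EReal.eq_bot_iff_forall_lt]
        intro y
        refine lt_of_le_of_lt (hforall (y - 1) (hbot ▸ bot_le)) ?_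
        exact EReal.coe_lt_coe_iff.mpr (by linarith)
      exact this ▸ humean
    · obtain ⟨c, hc⟩ : ∃ c : ℝ, S = (c : EReal) :=
        ⟨S.toReal, (EReal.coe_toReal htop hbot).symm⟩
      rw [hc]
      exact humean.trans (hforall c (le_of_eq hc))
  -- monotonicity in the radius
  refine hmain.trans (essSup_mono_measure' ?_)
  exact Measure.restrict_mono
    (Set.inter_subset_inter_left Ω (ball_subset_ball hr0r)) le_rfl
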